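/- arXiv:2002.08329 — 3 statements merged into one kernel-verified Lean document; each statement's English description precedes it below -/
import Mathlib

section
/- Suppose the shared linear head hypothesis holds, ω₂ ≠ 0, the direct estimate v satisfies L(v⁺) = C · L(v) for some constant C with 0 < C < 1/2, and the model loss satisfies L_model < (1 − 2C) · L(v) / (2 · ‖ω₂‖²). Then L(v^m) < L(v). -/
open MeasureTheory
open scoped RealInnerProductSpace

/-- Proposition (HiMo paper): under the shared linear head hypothesis, if `ω₂ ≠ 0`,
`L(v⁺) = C · L(v)` with `0 < C < 1/2`, and the model loss satisfies
`L_model < (1 − 2C) · L(v) / (2‖ω₂‖²)`, then `L(v^m) < L(v)`. -/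
theorem hindsight_model_value_improvement
    {Ω : Type*} [MeasurableSpace Ω] (μ : Measure Ω) [IsProbabilityMeasure μ]
    (n d : ℕ)
    (f : Ω → EuclideanSpace ℝ (Fin n)) (φ φhat : Ω → EuclideanSpace ℝ (Fin d))
    (G v : Ω → ℝ)
    (hf : Measurable f) (hφ : Measurable φ) (hφhat : Measurable φhat)
    (hG : Measurable G) (hv : Measurable v)
    (ω₁ : EuclideanSpace ℝ (Fin n)) (ω₂ : EuclideanSpace ℝ (Fin d)) (b : ℝ)
    (hω₂ : ω₂ ≠ 0)
    (vplus vm : Ω → ℝ)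
    (hvplus : ∀ ω, vplus ω = ⟪ω₁, f ω⟫ + ⟪ω₂, φ ω⟫ + b)
    (hvm : ∀ ω, vm ω = ⟪ω₁, f ω⟫ + ⟪ω₂, φhat ω⟫ + b)
    (hint1 : Integrable (fun ω => (vplus ω - G ω) ^ 2) μ)
    (hint2 : Integrable (fun ω => (vm ω - G ω) ^ 2) μ)
    (hint3 : Integrable (fun ω => (v ω - G ω) ^ 2) μ)
    (hint4 : Integrable (fun ω => ‖φ ω - φhat ω‖ ^ 2) μ)
    (hint5 : Integrable (fun ω => (vm ω - vplus ω) ^ 2) μ)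
    (C : ℝ) (hC0 : 0 < C) (hC : C < 1 / 2)
    (hCL : ∫ ω, (vplus ω - G ω) ^ 2 ∂μ = C * ∫ ω, (v ω - G ω) ^ 2 ∂μ)
    (hmodel : ∫ ω, ‖φ ω - φhat ω‖ ^ 2 ∂μ
        < (1 - 2 * C) * (∫ ω, (v ω - G ω) ^ 2 ∂μ) / (2 * ‖ω₂‖ ^ 2)) :
    ∫ ω, (vm ω - G ω) ^ 2 ∂μ < ∫ ω, (v ω - G ω) ^ 2 ∂μ := by
  have hω₂pos : (0:ℝ) < ‖ω₂‖ ^ 2 := pow_pos (norm_pos_iff.mpr hω₂) 2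
  -- pointwise bound
  have hpt : ∀ ω, (vm ω - G ω) ^ 2 ≤
      2 * (‖ω₂‖ ^ 2 * ‖φ ω - φhat ω‖ ^ 2) + 2 * (vplus ω - G ω) ^ 2 := by
    intro ω
    have hdiff : vm ω - vplus ω = ⟪ω₂, φhat ω - φ ω⟫ := by
      rw [hvm, hvplus, inner_sub_right]; ring
    have hcs : |⟪ω₂, φhat ω - φ ω⟫| ≤ ‖ω₂‖ * ‖φhat ω - φ ω‖ :=
      abs_real_inner_le_norm _ _
    have h1 : (vm ω - vplus ω) ^ 2 ≤ ‖ω₂‖ ^ 2 * ‖φ ω - φhat ω‖ ^ 2 := by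
      rw [hdiff]
      have := sq_le_sq' (neg_le_of_abs_le hcs) (le_of_abs_le hcs)
      calc ⟪ω₂, φhat ω - φ ω⟫ ^ 2 ≤ (‖ω₂‖ * ‖φhat ω - φ ω‖) ^ 2 := this
        _ = ‖ω₂‖ ^ 2 * ‖φ ω - φhat ω‖ ^ 2 := by rw [norm_sub_rev]; ring
    have h2 : (vm ω - G ω) ^ 2 ≤ 2 * (vm ω - vplus ω) ^ 2 + 2 * (vplus ω - G ω) ^ 2 := by
      nlinarith [sq_nonneg (vm ω - 2 * vplus ω + G ω)]
    linarith
  have hintconst : Integrable (fun ω =>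
      2 * (‖ω₂‖ ^ 2 * ‖φ ω - φhat ω‖ ^ 2) + 2 * (vplus ω - G ω) ^ 2) μ :=
    ((hint4.const_mul _).const_mul 2).add (hint1.const_mul 2)
  have hIle : ∫ ω, (vm ω - G ω) ^ 2 ∂μ ≤
      ∫ ω, (2 * (‖ω₂‖ ^ 2 * ‖φ ω - φhat ω‖ ^ 2) + 2 * (vplus ω - G ω) ^ 2) ∂μ :=
    integral_mono hint2 hintconst hpt
  rw [integral_add ((hint4.const_mul _).const_mul 2) (hint1.const_mul 2),
    integral_const_mul, integral_const_mul, integral_const_mul, hCL] at hIle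
  have hm : 2 * ‖ω₂‖ ^ 2 * ∫ ω, ‖φ ω - φhat ω‖ ^ 2 ∂μ
      < (1 - 2 * C) * ∫ ω, (v ω - G ω) ^ 2 ∂μ := by
    have h2pos : (0:ℝ) < 2 * ‖ω₂‖ ^ 2 := by linarith
    rw [div_eq_mul_inv] at hmodel
    calc 2 * ‖ω₂‖ ^ 2 * ∫ ω, ‖φ ω - φhat ω‖ ^ 2 ∂μ
        < 2 * ‖ω₂‖ ^ 2 * ((1 - 2 * C) * (∫ ω, (v ω - G ω) ^ 2 ∂μ) * (2 * ‖ω₂‖ ^ 2)⁻¹) :=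
          by exact (mul_lt_mul_iff_right₀ h2pos).mpr hmodel
      _ = (1 - 2 * C) * ∫ ω, (v ω - G ω) ^ 2 ∂μ := by field_simp
  nlinarith [hIle, hm]
end

section
/- Suppose the shared linear head hypothesis holds, the direct estimate v satisfies L(v⁺) = C · L(v) for some constant C with 0 < C < 1/2, and the model loss satisfies the denominator-cleared condition 2 · ‖ω₂‖² · L_model < (1 − 2C) · L(v). Then L(v^m) < L(v). -/
open MeasureTheory
open scoped RealInnerProductSpace

/-- Denominator-cleared version: under the shared linear head hypothesis, if
`L(v⁺) = C · L(v)` with `0 < C < 1/2` and `2‖ω₂‖² · L_model < (1 − 2C) · L(v)`,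
then `L(v^m) < L(v)`. -/
theorem hindsight_model_value_improvement_cleared
    {Ω : Type*} [MeasurableSpace Ω] (μ : Measure Ω) [IsProbabilityMeasure μ]
    (n d : ℕ)
    (f : Ω → EuclideanSpace ℝ (Fin n)) (φ φhat : Ω → EuclideanSpace ℝ (Fin d))
    (G v : Ω → ℝ)
    (hf : Measurable f) (hφ : Measurable φ) (hφhat : Measurable φhat)
    (hG : Measurable G) (hv : Measurable v)
    (ω₁ : EuclideanSpace ℝ (Fin n)) (ω₂ : EuclideanSpace ℝ (Fin d)) (b : ℝ)
    (vplus vm : Ω → ℝ)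
    (hvplus : ∀ ω, vplus ω = ⟪ω₁, f ω⟫ + ⟪ω₂, φ ω⟫ + b)
    (hvm : ∀ ω, vm ω = ⟪ω₁, f ω⟫ + ⟪ω₂, φhat ω⟫ + b)
    (hint1 : Integrable (fun ω => (vplus ω - G ω) ^ 2) μ)
    (hint2 : Integrable (fun ω => (vm ω - G ω) ^ 2) μ)
    (hint3 : Integrable (fun ω => (v ω - G ω) ^ 2) μ)
    (hint4 : Integrable (fun ω => ‖φ ω - φhat ω‖ ^ 2) μ)
    (hint5 : Integrable (fun ω => (vm ω - vplus ω) ^ 2) μ)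
    (C : ℝ) (hC0 : 0 < C) (hC : C < 1 / 2)
    (hCL : ∫ ω, (vplus ω - G ω) ^ 2 ∂μ = C * ∫ ω, (v ω - G ω) ^ 2 ∂μ)
    (hmodel : 2 * ‖ω₂‖ ^ 2 * ∫ ω, ‖φ ω - φhat ω‖ ^ 2 ∂μ
        < (1 - 2 * C) * ∫ ω, (v ω - G ω) ^ 2 ∂μ) :
    ∫ ω, (vm ω - G ω) ^ 2 ∂μ < ∫ ω, (v ω - G ω) ^ 2 ∂μ := by
  -- pointwise bound: (vm-G)^2 ≤ 2(vplus-G)^2 + 2(vm-vplus)^2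
  have hpt : ∀ ω, (vm ω - G ω) ^ 2 ≤ 2 * (vplus ω - G ω) ^ 2 + 2 * (vm ω - vplus ω) ^ 2 := by
    intro ω; nlinarith [sq_nonneg (vm ω - 2 * vplus ω + G ω)]
  have h1 : ∫ ω, (vm ω - G ω) ^ 2 ∂μ
      ≤ 2 * ∫ ω, (vplus ω - G ω) ^ 2 ∂μ + 2 * ∫ ω, (vm ω - vplus ω) ^ 2 ∂μ := by
    have := integral_mono hint2 ((hint1.const_mul 2).add (hint5.const_mul 2)) hpt
    simpa [integral_add (hint1.const_mul 2) (hint5.const_mul 2), integral_const_mul] using this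
  -- Cauchy-Schwarz pointwise
  have hcs : ∀ ω, (vm ω - vplus ω) ^ 2 ≤ ‖ω₂‖ ^ 2 * ‖φ ω - φhat ω‖ ^ 2 := by
    intro ω
    have hdiff : vm ω - vplus ω = ⟪ω₂, φhat ω - φ ω⟫ := by
      rw [hvm, hvplus, inner_sub_right]; ring
    rw [hdiff]
    have := abs_real_inner_le_norm ω₂ (φhat ω - φ ω)
    have h2 : ‖φhat ω - φ ω‖ = ‖φ ω - φhat ω‖ := norm_sub_rev _ _
    calc ⟪ω₂, φhat ω - φ ω⟫ ^ 2 = |⟪ω₂, φhat ω - φ ω⟫| ^ 2 := (sq_abs _).symm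
      _ ≤ (‖ω₂‖ * ‖φ ω - φhat ω‖) ^ 2 := by
          apply pow_le_pow_left₀ (abs_nonneg _); rw [← h2]; exact this
      _ = ‖ω₂‖ ^ 2 * ‖φ ω - φhat ω‖ ^ 2 := by ring
  have h2 : ∫ ω, (vm ω - vplus ω) ^ 2 ∂μ ≤ ‖ω₂‖ ^ 2 * ∫ ω, ‖φ ω - φhat ω‖ ^ 2 ∂μ := by
    have := integral_mono hint5 (hint4.const_mul (‖ω₂‖ ^ 2)) hcs
    simpa [integral_const_mul] using this
  calc ∫ ω, (vm ω - G ω) ^ 2 ∂μ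
      ≤ 2 * ∫ ω, (vplus ω - G ω) ^ 2 ∂μ + 2 * ∫ ω, (vm ω - vplus ω) ^ 2 ∂μ := h1
    _ ≤ 2 * (C * ∫ ω, (v ω - G ω) ^ 2 ∂μ) + 2 * (‖ω₂‖ ^ 2 * ∫ ω, ‖φ ω - φhat ω‖ ^ 2 ∂μ) := by
        rw [hCL]; linarith
    _ < ∫ ω, (v ω - G ω) ^ 2 ∂μ := by nlinarith
end

section
/- Under the shared linear head hypothesis, the model-based value loss is bounded by twice the sum of the weighted model loss and the hindsight value loss: L(v^m) ≤ 2 · (‖ω₂‖² · L_model + L(v⁺)). -/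
open MeasureTheory
open scoped RealInnerProductSpace

/-- Under the shared linear head hypothesis,
`L(v^m) ≤ 2 · (‖ω₂‖² · L_model + L(v⁺))`. -/
theorem himo_model_value_loss_bound
    {Ω : Type*} [MeasurableSpace Ω] (μ : Measure Ω) [IsProbabilityMeasure μ]
    (n d : ℕ)
    (f : Ω → EuclideanSpace ℝ (Fin n)) (φ φhat : Ω → EuclideanSpace ℝ (Fin d))
    (G : Ω → ℝ)
    (hf : Measurable f) (hφ : Measurable φ) (hφhat : Measurable φhat)
    (hG : Measurable G)
    (ω₁ : EuclideanSpace ℝ (Fin n)) (ω₂ : EuclideanSpace ℝ (Fin d)) (b : ℝ)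
    (vplus vm : Ω → ℝ)
    (hvplus : ∀ ω, vplus ω = ⟪ω₁, f ω⟫ + ⟪ω₂, φ ω⟫ + b)
    (hvm : ∀ ω, vm ω = ⟪ω₁, f ω⟫ + ⟪ω₂, φhat ω⟫ + b)
    (hint1 : Integrable (fun ω => (vplus ω - G ω) ^ 2) μ)
    (hint2 : Integrable (fun ω => (vm ω - G ω) ^ 2) μ)
    (hint3 : Integrable (fun ω => ‖φ ω - φhat ω‖ ^ 2) μ)
    (hint4 : Integrable (fun ω => (vm ω - vplus ω) ^ 2) μ) :
    ∫ ω, (vm ω - G ω) ^ 2 ∂μ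
      ≤ 2 * (‖ω₂‖ ^ 2 * (∫ ω, ‖φ ω - φhat ω‖ ^ 2 ∂μ) + ∫ ω, (vplus ω - G ω) ^ 2 ∂μ) := by
  have h1 : ∫ ω, (vm ω - G ω) ^ 2 ∂μ
      ≤ ∫ ω, 2 * ((vm ω - vplus ω) ^ 2 + (vplus ω - G ω) ^ 2) ∂μ := by
    refine integral_mono hint2 ((hint4.add hint1).const_mul 2) fun ω => ?_
    nlinarith [sq_nonneg (vm ω - vplus ω - (vplus ω - G ω)), sq_nonneg (vm ω - G ω)]
  have h2 : ∫ ω, (vm ω - vplus ω) ^ 2 ∂μ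
      ≤ ∫ ω, ‖ω₂‖ ^ 2 * ‖φ ω - φhat ω‖ ^ 2 ∂μ := by
    refine integral_mono hint4 (hint3.const_mul _) fun ω => ?_
    have h : vm ω - vplus ω = ⟪ω₂, φhat ω - φ ω⟫ := by
      rw [hvm, hvplus, inner_sub_right]; ring
    have hcs := abs_real_inner_le_norm ω₂ (φhat ω - φ ω)
    have habs : |vm ω - vplus ω| ≤ ‖ω₂‖ * ‖φ ω - φhat ω‖ := by
      rw [h, norm_sub_rev (φ ω)] ; exact hcs
    calc (vm ω - vplus ω) ^ 2 = |vm ω - vplus ω| ^ 2 := (sq_abs _).symm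
      _ ≤ (‖ω₂‖ * ‖φ ω - φhat ω‖) ^ 2 := by
          exact pow_le_pow_left₀ (abs_nonneg _) habs 2
      _ = ‖ω₂‖ ^ 2 * ‖φ ω - φhat ω‖ ^ 2 := by ring
  rw [integral_const_mul] at h2
  rw [integral_const_mul] at h1
  rw [integral_add hint4 hint1] at h1
  linarith
end
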